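/- arXiv:2605.02645 — 4 statements merged into one kernel-verified Lean document; each statement's English description precedes it below -/
import Mathlib

section
/- Real t-Schur decomposition: every real tensor A ∈ ℝ^{n×n×p} admits a factorization A = U * T * Uᵀ under the t-product, where U ∈ ℝ^{n×n×p} is an orthogonal tensor and T ∈ ℝ^{n×n×p} is f-quasi-triangular, i.e., there is a partition n = n_1 + … + n_m with each n_j ∈ {1,2} such that every frontal slice of T is upper block triangular with respect to this fixed partition. -/
open Matrix Complex BigOperators Kronecker

/-- A third-order tensor, represented by its frontal slices (indexed cyclically). -/
abbrev Tensor (F : Type*) (m n p : ℕ) : Type _ :=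
  ZMod p → Matrix (Fin m) (Fin n) F

/-- The block-circulant matrix of a tensor: block (i,j) is slice (i - j mod p). -/
def bcirc {F : Type*} {m n p : ℕ} (A : Tensor F m n p) :
    Matrix (ZMod p × Fin m) (ZMod p × Fin n) F :=
  Matrix.of fun ir jc => A (ir.1 - jc.1) ir.2 jc.2

/-- The t-product of tensors: (A*B)^{(i)} = ∑_j A^{(i-j)} B^{(j)}. -/
def tpr {F : Type*} [CommRing F] {m n l p : ℕ} [NeZero p]
    (A : Tensor F m n p) (B : Tensor F n l p) : Tensor F m l p :=
  fun i => ∑ j : ZMod p, A (i - j) * B j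

/-- The identity tensor: first frontal slice is I_n, others are zero. -/
def tId (F : Type*) [CommRing F] (n p : ℕ) [NeZero p] : Tensor F n n p :=
  fun i => if i = 0 then 1 else 0

/-- Tensor transpose: transpose each slice and reverse the order of slices 2..p. -/
def tT {F : Type*} {m n p : ℕ} (A : Tensor F m n p) : Tensor F n m p :=
  fun i => (A (-i))ᵀ

/-- ξ = e^{-2πi/p}. -/
noncomputable def xi (p : ℕ) : ℂ :=
  Complex.exp (-(2 * Real.pi * Complex.I) / p)

/-- The normalized DFT matrix of order p. -/
noncomputable def Fmat (p : ℕ) : Matrix (ZMod p) (ZMod p) ℂ :=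
  Matrix.of fun j k => (1 / (Real.sqrt p : ℂ)) * xi p ^ (j.val * k.val)

/-- The Fourier blocks of a complex tensor: A_i = ∑_k ξ^{(i)(k)} A^{(k)} (0-based). -/
noncomputable def fblock {m n p : ℕ} [NeZero p] (A : Tensor ℂ m n p) (i : ZMod p) :
    Matrix (Fin m) (Fin n) ℂ :=
  ∑ k : ZMod p, xi p ^ (i.val * k.val) • A k

/-- Complexification of a real tensor. -/
def cplx {m n p : ℕ} (A : Tensor ℝ m n p) : Tensor ℂ m n p :=
  fun i => (A i).map (Complex.ofReal)

/-- Block diagonal matrix with p equal-size blocks. -/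
def blockDiag {m n p : ℕ} (M : ZMod p → Matrix (Fin m) (Fin n) ℂ) :
    Matrix (ZMod p × Fin m) (ZMod p × Fin n) ℂ :=
  Matrix.of fun ir jc => if ir.1 = jc.1 then M ir.1 ir.2 jc.2 else 0

/-- Entrywise conjugation of a complex matrix. -/
def conjM {m n : ℕ} (M : Matrix (Fin m) (Fin n) ℂ) : Matrix (Fin m) (Fin n) ℂ :=
  M.map (starRingEnd ℂ)

/-- A complex matrix is real if all entries have zero imaginary part. -/
def IsRealM {m n : ℕ} (M : Matrix (Fin m) (Fin n) ℂ) : Prop :=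
  ∀ r c, (M r c).im = 0

/-!
The discrete Fourier transform along the third mode turns the t-product into slice-wise matrix
multiplication and the tensor transpose into the conjugate transpose, and the Fourier slices of a
real tensor satisfy `Â (-i) = conj (Â i)`. Over `ℝ` and `ℂ` irreducible polynomials have degree at
most two, so every endomorphism of a space of dimension at least two has a two-dimensional
invariant subspace; splitting these off one after the other makes every matrix unitarily similar
to one that is block upper triangular for the fixed partition `{0, 1}, {2, 3}, …`. Taking such
unitary factors `Û i` on one half of `ZMod p`, their conjugates on the other half, and real
orthogonal ones at the self-conjugate frequencies keeps `Û (-i) = conj (Û i)`, so the inverse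
transforms `U` of `Û` and `T` of `Û iᴴ Â i Û i` are real tensors with `A = U * T * Uᵀ`.
-/

open scoped ZMod

section Fourier
open ZMod

variable {m n l p : ℕ} [NeZero p]

lemma dft_tpr (A : Tensor ℂ m n p) (B : Tensor ℂ n l p) (i : ZMod p) :
    𝓕 (tpr A B) i = 𝓕 A i * 𝓕 B i := by
  simp only [dft_apply, tpr, Finset.smul_sum, Matrix.sum_mul, Matrix.mul_sum]
  rw [Finset.sum_comm]
  refine Finset.sum_congr rfl fun j _ => ?_
  refine (Fintype.sum_equiv (Equiv.addRight j) _ _ fun k => ?_).symm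
  rw [Equiv.coe_addRight, add_sub_cancel_right, Matrix.smul_mul, Matrix.mul_smul, smul_smul,
    ← AddChar.map_add_eq_mul]
  congr 2
  ring

lemma dft_tId (i : ZMod p) : 𝓕 (tId ℂ n p) i = 1 := by
  simp [dft_apply, tId]

lemma dft_tT (C : Tensor ℂ m n p) (i : ZMod p) : 𝓕 (tT C) i = (𝓕 C (-i))ᵀ := by
  simp only [dft_apply, tT, Matrix.transpose_sum, Matrix.transpose_smul]
  refine Fintype.sum_equiv (Equiv.neg _) _ _ fun k => ?_
  simp

lemma dft_cplx_neg (R : Tensor ℝ m n p) (i : ZMod p) :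
    𝓕 (cplx R) (-i) = conjM (𝓕 (cplx R) i) := by
  ext r c
  simp [dft_apply, conjM, cplx, Matrix.sum_apply, AddChar.map_neg_eq_conj]

lemma dft_cplx_tT (R : Tensor ℝ m n p) (i : ZMod p) :
    𝓕 (cplx (tT R)) i = (𝓕 (cplx R) i)ᴴ := by
  rw [show cplx (tT R) = tT (cplx R) from rfl, dft_tT, dft_cplx_neg]
  rfl

lemma conjM_invDFT_eq_self (Ψ : ZMod p → Matrix (Fin m) (Fin n) ℂ)
    (hΨ : ∀ i, Ψ (-i) = conjM (Ψ i)) (k : ZMod p) : conjM (𝓕⁻ Ψ k) = 𝓕⁻ Ψ k := by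
  ext r c
  simp only [invDFT_apply, conjM, Matrix.map_apply, Matrix.smul_apply, Matrix.sum_apply,
    smul_eq_mul, map_mul, map_sum, map_inv₀, map_natCast]
  congr 1
  refine Fintype.sum_equiv (Equiv.neg _) _ _ fun j => ?_
  simp [hΨ, conjM, ← AddChar.map_neg_eq_conj]

end Fourier

section InvariantSubspace
open Module Polynomial

variable {K V : Type*} [Field K] [AddCommGroup V] [Module K V]

lemma Submodule.exists_le_finrank_eq (U : Submodule K V) {k : ℕ} (hk : k ≤ finrank K U) :
    ∃ W ≤ U, finrank K W = k := by
  obtain ⟨b, hb⟩ := exists_linearIndependent_of_le_finrank hk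
  refine ⟨(Submodule.span K (Set.range b)).map U.subtype, Submodule.map_subtype_le _ _, ?_⟩
  rw [Submodule.finrank_map_subtype_eq, finrank_span_eq_card hb, Fintype.card_fin]

lemma Module.End.exists_irreducible_ker_aeval_ne_bot [FiniteDimensional K V] [Nontrivial V]
    (f : Module.End K V) :
    ∃ q : K[X], Irreducible q ∧ LinearMap.ker (aeval f q) ≠ ⊥ := by
  have hf : IsIntegral K f := Algebra.IsIntegral.isIntegral f
  obtain ⟨q, hq, g, hqg⟩ := exists_irreducible_of_natDegree_pos (minpoly.natDegree_pos hf)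
  refine ⟨q, hq, fun hker => ?_⟩
  have hg0 : g ≠ 0 := by
    rintro rfl
    exact minpoly.ne_zero hf (by simpa using hqg)
  have hg : aeval f g = 0 := by
    ext v
    have hv : aeval f q (aeval f g v) = 0 := by
      rw [← Module.End.mul_apply, ← map_mul, ← hqg, minpoly.aeval, LinearMap.zero_apply]
    simpa using LinearMap.ker_eq_bot.mp hker (hv.trans (map_zero _).symm)
  have hdeg := natDegree_le_of_dvd (minpoly.dvd K f hg) hg0
  rw [hqg, natDegree_mul hq.ne_zero hg0] at hdeg
  have := hq.natDegree_pos
  omega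

lemma Module.End.span_pair_mem_invtSubmodule {f : Module.End K V} {q : K[X]}
    (hq : 0 < q.natDegree) (hq2 : q.natDegree ≤ 2) {v : V} (hv : aeval f q v = 0) :
    Submodule.span K {v, f v} ∈ f.invtSubmodule := by
  set a := q.coeff 2
  set b := q.coeff 1
  set c := q.coeff 0
  have hquad : q = C a * X ^ 2 + C b * X + C c := eq_quadratic_of_degree_le_two
    (natDegree_le_iff_degree_le.mp hq2)
  have hrel : a • f (f v) + b • f v + c • v = 0 := by
    rw [hquad] at hv
    simpa [pow_two, Module.algebraMap_end_apply] using hv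
  have hv_mem : v ∈ Submodule.span K {v, f v} := Submodule.subset_span (by simp)
  have hfv_mem : f v ∈ Submodule.span K {v, f v} := Submodule.subset_span (by simp)
  have hffv_mem : f (f v) ∈ Submodule.span K {v, f v} := by
    by_cases ha : a = 0
    · have hb : b ≠ 0 := by
        rintro hb
        have : q.natDegree = 0 := by rw [hquad, ha, hb]; simp
        exact hq.ne' this
      have hbfv : b • f v = -(c • v) := eq_neg_of_add_eq_zero_left (by simpa [ha] using hrel)
      rw [← inv_smul_smul₀ hb (f (f v)), ← map_smul, hbfv, map_neg, map_smul]
      exact Submodule.smul_mem _ _ (Submodule.neg_mem _ (Submodule.smul_mem _ _ hfv_mem))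
    · have haffv : a • f (f v) = -(b • f v + c • v) :=
        eq_neg_of_add_eq_zero_left (by rwa [← add_assoc])
      rw [← inv_smul_smul₀ ha (f (f v)), haffv]
      exact Submodule.smul_mem _ _ (Submodule.neg_mem _ (Submodule.add_mem _
        (Submodule.smul_mem _ _ hfv_mem) (Submodule.smul_mem _ _ hv_mem)))
  rw [Module.End.mem_invtSubmodule, Submodule.span_le]
  rintro x (rfl | rfl)
  · exact hfv_mem
  · exact hffv_mem

lemma Module.End.exists_eigenvector_or_invtSubmodule_finrank_eq_two [FiniteDimensional K V]
    [Nontrivial V] (hK : ∀ q : K[X], Irreducible q → q.natDegree ≤ 2) (f : Module.End K V) :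
    (∃ (μ : K) (v : V), v ≠ 0 ∧ f v = μ • v) ∨ ∃ W ∈ f.invtSubmodule, finrank K W = 2 := by
  classical
  obtain ⟨q, hq, hker⟩ := f.exists_irreducible_ker_aeval_ne_bot
  obtain ⟨v, hv, hv0⟩ := Submodule.exists_mem_ne_zero_of_ne_bot hker
  have hW := span_pair_mem_invtSubmodule hq.natDegree_pos (hK q hq) hv
  by_cases h2 : finrank K (Submodule.span K {v, f v}) = 2
  · exact Or.inr ⟨_, hW, h2⟩
  left
  have hle : finrank K (Submodule.span K {v, f v}) ≤ 2 := by
    have := (finrank_span_finset_le_card (R := K) ({v, f v} : Finset V)).trans Finset.card_le_two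
    rwa [Finset.coe_pair] at this
  have hspan : Submodule.span K {v} = Submodule.span K {v, f v} :=
    Submodule.eq_of_le_of_finrank_le (Submodule.span_mono (by simp))
      (by rw [finrank_span_singleton hv0]; omega)
  have hfv : f v ∈ Submodule.span K {v} := hspan ▸ Submodule.subset_span (by simp)
  obtain ⟨μ, hμ⟩ := Submodule.mem_span_singleton.mp hfv
  exact ⟨μ, v, hv0, hμ.symm⟩

lemma Module.End.exists_invtSubmodule_finrank_eq_two [FiniteDimensional K V]
    (hK : ∀ q : K[X], Irreducible q → q.natDegree ≤ 2) (f : Module.End K V)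
    (hV : 2 ≤ finrank K V) : ∃ W ∈ f.invtSubmodule, finrank K W = 2 := by
  -- For an eigenvalue `μ`, either `range (f - μ)` is a smaller invariant space of dimension at
  -- least two, or the eigenspace has dimension at least two and each of its subspaces is invariant.
  induction hd : finrank K V using Nat.strong_induction_on generalizing V with
  | _ d ih =>
  rcases hV.eq_or_lt with h2 | h3
  · exact ⟨⊤, invtSubmodule.top_mem f, by rw [finrank_top]; omega⟩
  have : Nontrivial V := Module.finrank_pos_iff (R := K).mp (by omega)
  obtain ⟨μ, t, ht0, hft⟩ | hW := f.exists_eigenvector_or_invtSubmodule_finrank_eq_two hK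
  swap
  · exact hW
  set g : Module.End K V := f - μ • 1
  have hrange : LinearMap.range g ∈ f.invtSubmodule := by
    rintro _ ⟨y, rfl⟩
    exact ⟨f y, by simp [g]⟩
  have hker : 0 < finrank K (LinearMap.ker g) := by
    refine Module.finrank_pos_iff.mpr (Submodule.nontrivial_iff_ne_bot.mpr ?_)
    exact (Submodule.ne_bot_iff _).mpr ⟨t, by simp [g, hft], ht0⟩
  have hrank := LinearMap.finrank_range_add_finrank_ker g
  by_cases hr : 2 ≤ finrank K (LinearMap.range g)
  · obtain ⟨W, hW, hW2⟩ := ih _ (by omega) (f.restrict hrange) hr rfl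
    exact ⟨_, invtSubmodule.map_subtype_mem_of_mem_invtSubmodule f hrange hW,
      by rwa [Submodule.finrank_map_subtype_eq]⟩
  · obtain ⟨W, hWle, hW2⟩ := (LinearMap.ker g).exists_le_finrank_eq (k := 2) (by omega)
    refine ⟨W, fun x hx => ?_, hW2⟩
    have hgx : f x - μ • x = 0 := by simpa [g] using hWle hx
    rw [Submodule.mem_comap, sub_eq_zero.mp hgx]
    exact W.smul_mem μ hx

end InvariantSubspace

def pairIndex {n : ℕ} (r : Fin n) : ℕ := (r : ℕ) / 2

section BlockSchur
open Module Polynomial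

variable {𝕜 : Type*} [RCLike 𝕜]

theorem exists_orthonormalBasis_inner_map_eq_zero_of_pairIndex_lt
    (h𝕜 : ∀ q : 𝕜[X], Irreducible q → q.natDegree ≤ 2) (n : ℕ) {E : Type*}
    [NormedAddCommGroup E] [InnerProductSpace 𝕜 E] [FiniteDimensional 𝕜 E]
    (hn : finrank 𝕜 E = n) (f : Module.End 𝕜 E) :
    ∃ b : OrthonormalBasis (Fin n) 𝕜 E,
      ∀ r c, pairIndex c < pairIndex r → inner 𝕜 (b r) (f (b c)) = 0 := by
  -- Split off a two-dimensional invariant `W` and recurse on the compression of `f` to `Wᗮ`.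
  induction n using Nat.strong_induction_on generalizing E with
  | _ n ih =>
  by_cases hn2 : n < 2
  · refine ⟨(stdOrthonormalBasis 𝕜 E).reindex (finCongr hn), fun r c h => ?_⟩
    simp only [pairIndex] at h
    omega
  obtain ⟨m, rfl⟩ : ∃ m, n = 2 + m := ⟨n - 2, by omega⟩
  obtain ⟨W, hW, hW2⟩ := f.exists_invtSubmodule_finrank_eq_two h𝕜 (by omega)
  have hWperp : finrank 𝕜 Wᗮ = m := Submodule.finrank_add_finrank_orthogonal' (by omega)
  let g : Module.End 𝕜 Wᗮ := Wᗮ.orthogonalProjectionOnto.toLinearMap ∘ₗ f ∘ₗ Wᗮ.subtype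
  obtain ⟨b', hb'⟩ := ih m (by omega) hWperp g
  let b₁ : OrthonormalBasis (Fin 2) 𝕜 W := (stdOrthonormalBasis 𝕜 W).reindex (finCongr hW2)
  let b := ((b₁.prod b').map W.orthogonalDecomposition.symm).reindex finSumFinEquiv
  have hb_inl (i : Fin 2) : b (finSumFinEquiv (.inl i)) = b₁ i := by simp [b]
  have hb_inr (j : Fin m) : b (finSumFinEquiv (.inr j)) = b' j := by simp [b]
  refine ⟨b, fun r c hrc => ?_⟩
  obtain ⟨r | i, rfl⟩ := finSumFinEquiv.surjective r
  · simp only [pairIndex, finSumFinEquiv_apply_left, Fin.val_castAdd] at hrc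
    omega
  obtain ⟨c | j, rfl⟩ := finSumFinEquiv.surjective c
  · rw [hb_inr, hb_inl]
    exact Submodule.inner_left_of_mem_orthogonal (Submodule.mem_comap.mp (hW (b₁ c).2)) (b' i).2
  · rw [hb_inr, hb_inr]
    have hji : pairIndex j < pairIndex i := by
      simp only [pairIndex, finSumFinEquiv_apply_right, Fin.val_natAdd] at hrc ⊢
      omega
    simpa [g] using hb' i j hji

theorem Matrix.exists_mem_unitaryGroup_blockTriangular_pairIndex
    (h𝕜 : ∀ q : 𝕜[X], Irreducible q → q.natDegree ≤ 2) {n : ℕ} (M : Matrix (Fin n) (Fin n) 𝕜) :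
    ∃ Q ∈ Matrix.unitaryGroup (Fin n) 𝕜, (star Q * M * Q).BlockTriangular pairIndex := by
  obtain ⟨b, hb⟩ := exists_orthonormalBasis_inner_map_eq_zero_of_pairIndex_lt h𝕜 n
    finrank_euclideanSpace_fin (Matrix.toEuclideanLin M)
  refine ⟨_, (EuclideanSpace.basisFun (Fin n) 𝕜).toMatrix_orthonormalBasis_mem_unitary b,
    fun r c h => ?_⟩
  rw [← hb r c h]
  simp only [Matrix.mul_apply, Matrix.star_apply, Basis.toMatrix_apply,
    OrthonormalBasis.coe_toBasis_repr_apply, EuclideanSpace.basisFun_repr, PiLp.inner_apply,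
    RCLike.inner_apply, Matrix.toLpLin_apply, RCLike.star_def, Matrix.mulVec, dotProduct,
    Finset.sum_mul]
  rw [Finset.sum_comm]
  exact Finset.sum_congr rfl fun _ _ => Finset.sum_congr rfl fun _ _ => by ring

end BlockSchur

section ConjSymmetricSchur
open Polynomial

variable {m n : ℕ}

lemma conjM_mul {l : ℕ} (X : Matrix (Fin l) (Fin m) ℂ) (Y : Matrix (Fin m) (Fin n) ℂ) :
    conjM (X * Y) = conjM X * conjM Y :=
  Matrix.map_mul

lemma conjM_star (X : Matrix (Fin n) (Fin n) ℂ) : conjM (star X) = star (conjM X) := by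
  ext; simp [conjM]

lemma conjM_conjM (X : Matrix (Fin m) (Fin n) ℂ) : conjM (conjM X) = X := by
  ext; simp [conjM]

lemma conjM_mem_unitaryGroup {Q : Matrix (Fin n) (Fin n) ℂ}
    (hQ : Q ∈ Matrix.unitaryGroup (Fin n) ℂ) : conjM Q ∈ Matrix.unitaryGroup (Fin n) ℂ := by
  rw [Matrix.mem_unitaryGroup_iff] at hQ ⊢
  rw [← conjM_star, ← conjM_mul, hQ]
  ext; simp [conjM, Matrix.one_apply, apply_ite]

lemma star_map_ofRealHom (Q : Matrix (Fin n) (Fin n) ℝ) :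
    star (Q.map Complex.ofRealHom) = (star Q).map Complex.ofRealHom := by
  ext; simp

lemma map_ofRealHom_mem_unitaryGroup {Q : Matrix (Fin n) (Fin n) ℝ}
    (hQ : Q ∈ Matrix.unitaryGroup (Fin n) ℝ) :
    Q.map Complex.ofRealHom ∈ Matrix.unitaryGroup (Fin n) ℂ := by
  rw [Matrix.mem_unitaryGroup_iff] at hQ ⊢
  rw [star_map_ofRealHom, ← Matrix.map_mul, hQ, Matrix.map_one _ (map_zero _) (map_one _)]

lemma Matrix.exists_mem_unitaryGroup_blockTriangular_pairIndex_conjM_eq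
    (M : Matrix (Fin n) (Fin n) ℂ) :
    ∃ Q ∈ Matrix.unitaryGroup (Fin n) ℂ, (star Q * M * Q).BlockTriangular pairIndex ∧
      (conjM M = M → conjM Q = Q) := by
  by_cases hM : conjM M = M
  swap
  · obtain ⟨Q, hQ, hT⟩ := Matrix.exists_mem_unitaryGroup_blockTriangular_pairIndex
      (fun q hq => (natDegree_eq_of_degree_eq_some
        (IsAlgClosed.degree_eq_one_of_irreducible ℂ hq)).le.trans one_le_two) M
    exact ⟨Q, hQ, hT, fun h => absurd h hM⟩
  obtain ⟨Q, hQ, hT⟩ := Matrix.exists_mem_unitaryGroup_blockTriangular_pairIndex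
    (fun q hq => hq.natDegree_le_two) (M.map Complex.re)
  have hMre : (M.map Complex.re).map Complex.ofRealHom = M := by
    ext r c
    exact Complex.conj_eq_iff_re.mp (congrFun (congrFun hM r) c)
  refine ⟨Q.map Complex.ofRealHom, map_ofRealHom_mem_unitaryGroup hQ, ?_, fun _ => ?_⟩
  · rw [star_map_ofRealHom, ← hMre, ← Matrix.map_mul, ← Matrix.map_mul]
    exact hT.map Complex.ofRealHom
  · ext; simp [conjM]

end ConjSymmetricSchur

section ConjSymmetricFamily

variable {n p : ℕ} [NeZero p]

lemma exists_unitary_blockTriangular_conjM_neg (Ψ : ZMod p → Matrix (Fin n) (Fin n) ℂ)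
    (hΨ : ∀ i, Ψ (-i) = conjM (Ψ i)) :
    ∃ U : ZMod p → Matrix (Fin n) (Fin n) ℂ, ∀ i, U i ∈ Matrix.unitaryGroup (Fin n) ℂ ∧
      (star (U i) * Ψ i * U i).BlockTriangular pairIndex ∧ U (-i) = conjM (U i) := by
  choose Q hQ hQT hQreal using
    fun i => (Ψ i).exists_mem_unitaryGroup_blockTriangular_pairIndex_conjM_eq
  -- `Q` is used on the half `i.val ≤ (-i).val` and conjugated on the other; at a self-conjugate
  -- frequency `Ψ i` is real, so there `Q i` has to be real as well.
  refine ⟨fun i => if i.val ≤ (-i).val then Q i else conjM (Q (-i)), fun i => ?_⟩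
  rcases lt_trichotomy i.val (-i).val with hlt | heq | hgt
  · simp only [if_pos hlt.le, neg_neg, if_neg (not_le.mpr hlt)]
    exact ⟨hQ i, hQT i, trivial⟩
  · have hi : -i = i := (ZMod.val_injective p heq).symm
    simp only [hi, le_refl, if_true]
    exact ⟨hQ i, hQT i, (hQreal i (by rw [← hΨ, hi])).symm⟩
  · simp only [if_neg (not_le.mpr hgt), neg_neg, if_pos hgt.le, conjM_conjM]
    refine ⟨conjM_mem_unitaryGroup (hQ (-i)), ?_, trivial⟩
    have hΨi : Ψ i = conjM (Ψ (-i)) := by rw [← hΨ, neg_neg]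
    rw [hΨi, ← conjM_star, ← conjM_mul, ← conjM_mul]
    exact (hQT (-i)).map (starRingEnd ℂ)

end ConjSymmetricFamily

section RealTensors
variable {m n l p : ℕ} [NeZero p]

lemma cplx_tpr (A : Tensor ℝ m n p) (B : Tensor ℝ n l p) :
    cplx (tpr A B) = tpr (cplx A) (cplx B) := by
  funext i
  ext r c
  simp [cplx, tpr, Matrix.sum_apply, Matrix.mul_apply]

lemma cplx_tId : cplx (tId ℝ n p) = tId ℂ n p := by
  funext i
  ext r c
  by_cases h : i = 0 <;> simp [cplx, tId, h, Matrix.one_apply, apply_ite]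

lemma dft_cplx_injective :
    Function.Injective fun R : Tensor ℝ m n p => 𝓕 (cplx R) := by
  intro A B h
  funext i
  ext r c
  simpa [cplx] using congrFun (congrFun (congrFun (ZMod.dft.injective h) i) r) c

lemma cplx_map_re_invDFT (Ψ : ZMod p → Matrix (Fin m) (Fin n) ℂ)
    (hΨ : ∀ i, Ψ (-i) = conjM (Ψ i)) :
    cplx (fun k => (𝓕⁻ Ψ k).map Complex.re) = 𝓕⁻ Ψ := by
  funext k
  ext r c
  exact Complex.conj_eq_iff_re.mp (congrFun (congrFun (conjM_invDFT_eq_self Ψ hΨ k) r) c)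

lemma invDFT_blockTriangular {ι α : Type*} [LT α] {b : ι → α} (Ψ : ZMod p → Matrix ι ι ℂ)
    (hΨ : ∀ i, (Ψ i).BlockTriangular b) (k : ZMod p) : (𝓕⁻ Ψ k).BlockTriangular b := by
  intro r c h
  simp [ZMod.invDFT_apply, Matrix.sum_apply, hΨ _ h]

end RealTensors

lemma pairIndex_monotone {n : ℕ} : Monotone (pairIndex (n := n)) :=
  fun _ _ h => Nat.div_le_div_right h

lemma card_filter_pairIndex_eq_le_two {n : ℕ} (j : ℕ) :
    (Finset.univ.filter fun r : Fin n => pairIndex r = j).card ≤ 2 := by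
  refine (Finset.card_le_card_of_injOn (fun r : Fin n => (r : ℕ) % 2) (t := Finset.range 2)
    (fun r _ => Finset.mem_range.mpr (Nat.mod_lt _ two_pos)) ?_).trans_eq (Finset.card_range 2)
  intro r hr s hs hrs
  have hr' : (r : ℕ) / 2 = j := (Finset.mem_filter.mp (Finset.mem_coe.mp hr)).2
  have hs' : (s : ℕ) / 2 = j := (Finset.mem_filter.mp (Finset.mem_coe.mp hs)).2
  exact Fin.ext (by simp only at hrs; omega)

theorem stmt8 {n p : ℕ} [NeZero p] (A : Tensor ℝ n n p) :
    ∃ U T : Tensor ℝ n n p,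
      tpr (tT U) U = tId ℝ n p ∧ tpr U (tT U) = tId ℝ n p ∧
      (∃ blk : Fin n → ℕ, Monotone blk ∧
        (∀ j : ℕ, (Finset.univ.filter fun r : Fin n => blk r = j).card ≤ 2) ∧
        (∀ i, ∀ r c : Fin n, blk c < blk r → T i r c = 0)) ∧
      A = tpr U (tpr T (tT U)) := by
  obtain ⟨Uhat, hUhat⟩ := exists_unitary_blockTriangular_conjM_neg (𝓕 (cplx A)) (dft_cplx_neg A)
  set That := fun i => star (Uhat i) * 𝓕 (cplx A) i * Uhat i
  have hThat (i : ZMod p) : That (-i) = conjM (That i) := by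
    simp only [That, (hUhat i).2.2, dft_cplx_neg, conjM_mul, conjM_star]
  have hU := cplx_map_re_invDFT Uhat fun i => (hUhat i).2.2
  have hT := cplx_map_re_invDFT That hThat
  refine ⟨fun k => (𝓕⁻ Uhat k).map Complex.re, fun k => (𝓕⁻ That k).map Complex.re, ?_, ?_,
    ⟨pairIndex, pairIndex_monotone, card_filter_pairIndex_eq_le_two, fun k r c h => ?_⟩, ?_⟩
  · refine dft_cplx_injective (funext fun i => ?_)
    simp only [cplx_tpr, dft_tpr, dft_cplx_tT, cplx_tId, dft_tId, hU, LinearEquiv.apply_symm_apply]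
    exact Matrix.mem_unitaryGroup_iff'.mp (hUhat i).1
  · refine dft_cplx_injective (funext fun i => ?_)
    simp only [cplx_tpr, dft_tpr, dft_cplx_tT, cplx_tId, dft_tId, hU, LinearEquiv.apply_symm_apply]
    exact Matrix.mem_unitaryGroup_iff.mp (hUhat i).1
  · simp [invDFT_blockTriangular That (fun i => (hUhat i).2.1) k h]
  · refine dft_cplx_injective (funext fun i => ?_)
    simp only [cplx_tpr, dft_tpr, dft_cplx_tT, hU, hT, LinearEquiv.apply_symm_apply, That]
    have hu := Matrix.mem_unitaryGroup_iff.mp (hUhat i).1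
    rw [← Matrix.star_eq_conjTranspose]
    simp only [← Matrix.mul_assoc, hu, Matrix.one_mul]
    rw [Matrix.mul_assoc, hu, Matrix.mul_one]
end

section
/- Unit regularity of the real t-product ring: the ring (ℝ^{n×n×p}, +, *) is unit regular, i.e., for every A ∈ ℝ^{n×n×p} there exists an invertible W ∈ ℝ^{n×n×p} such that A * W * A = A. -/
open Matrix Complex BigOperators Kronecker

/-! The t-product identifies `ℝ^{n×n×p}` with the matrix ring `Mₙ(ℝ[ℤ/p])` over the group algebra
of the cyclic group, which is semisimple by Maschke's theorem. By Wedderburn–Artin a semisimple ring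
is a finite product of matrix rings over division rings, i.e. of opposites of endomorphism rings of
finite-dimensional vector spaces. For such an endomorphism `f`, the inverse of `f` from a complement
of `ker f` onto `range f`, together with any isomorphism from a complement of `range f` onto
`ker f` (the dimensions agree by rank–nullity), is an automorphism `g` with `f g f = f`. -/

def IsUnitRegular {M : Type*} [Monoid M] (a : M) : Prop :=
  ∃ u, IsUnit u ∧ a * u * a = a

section Monoid
variable {M N : Type*} [Monoid M] [Monoid N]

theorem IsUnitRegular.map {F : Type*} [FunLike F M N] [MonoidHomClass F M N] {a : M} (f : F)
    (h : IsUnitRegular a) : IsUnitRegular (f a) := by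
  obtain ⟨u, hu, hau⟩ := h
  exact ⟨f u, hu.map f, by rw [← map_mul, ← map_mul, hau]⟩

theorem IsUnitRegular.op {a : M} (h : IsUnitRegular a) : IsUnitRegular (MulOpposite.op a) := by
  obtain ⟨u, hu, hau⟩ := h
  exact ⟨.op u, hu.op, by rw [← MulOpposite.op_mul, ← MulOpposite.op_mul, ← mul_assoc, hau]⟩

end Monoid

theorem Pi.isUnitRegular {ι : Type*} {M : ι → Type*} [∀ i, Monoid (M i)] {a : ∀ i, M i}
    (h : ∀ i, IsUnitRegular (a i)) : IsUnitRegular a := by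
  choose u hu hau using h
  exact ⟨u, Pi.isUnit_iff.2 hu, funext hau⟩

theorem Module.End.isUnitRegular {K V : Type*} [DivisionRing K] [AddCommGroup V] [Module K V]
    [FiniteDimensional K V] (f : Module.End K V) : IsUnitRegular f := by
  obtain ⟨C, hC⟩ := (LinearMap.ker f).exists_isCompl
  obtain ⟨D, hD⟩ := (LinearMap.range f).exists_isCompl
  let ψ : C ≃ₗ[K] LinearMap.range f :=
    (Submodule.quotientEquivOfIsCompl _ C hC).symm.trans f.quotKerEquivRange
  have hψ (c : C) : (ψ c : V) = f c := by
    simp [ψ, Submodule.quotientEquivOfIsCompl_symm_apply]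
  have hdim : Module.finrank K D = Module.finrank K (LinearMap.ker f) := by
    have := f.finrank_range_add_finrank_ker
    have := Submodule.finrank_add_eq_of_isCompl hD
    omega
  let g : V ≃ₗ[K] V :=
    (Submodule.prodEquivOfIsCompl _ D hD).symm ≪≫ₗ
      ψ.symm.prodCongr (LinearEquiv.ofFinrankEq _ _ hdim) ≪≫ₗ
      Submodule.prodEquivOfIsCompl C _ hC.symm
  refine ⟨g.toLinearMap, (Module.End.isUnit_iff _).2 g.bijective, LinearMap.ext fun v => ?_⟩
  have hv : f v ∈ LinearMap.range f := ⟨v, rfl⟩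
  have : g (f v) = ψ.symm ⟨f v, hv⟩ := by
    simp [g, Submodule.prodEquivOfIsCompl_symm_apply_left _ _ hD ⟨f v, hv⟩]
  simp [this, ← hψ]

theorem Matrix.isUnitRegular {ι D : Type*} [Fintype ι] [DecidableEq ι] [DivisionRing D]
    (A : Matrix ι ι D) : IsUnitRegular A := by
  let e := matrixRingEquivEndVecMulOpposite (ι := ι) (A := D)
  simpa using ((Module.End.isUnitRegular (e A).unop).op).map e.symm

theorem IsSemisimpleRing.isUnitRegular {R : Type*} [Ring R] [IsSemisimpleRing R] (a : R) :
    IsUnitRegular a := by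
  obtain ⟨n, D, d, _, _, ⟨e⟩⟩ := IsSemisimpleRing.exists_ringEquiv_pi_matrix_divisionRing R
  simpa using (Pi.isUnitRegular fun i => (e a i).isUnitRegular).map e.symm

section TensorEquivMatrix
variable {R : Type*} [CommRing R] {m n l p : ℕ} [NeZero p]

noncomputable def tensorEquivMatrix :
    Tensor R m n p ≃ Matrix (Fin m) (Fin n) (AddMonoidAlgebra R (ZMod p)) where
  toFun A := Matrix.of fun r c => .ofCoeff (Finsupp.equivFunOnFinite.symm fun k => A k r c)
  invFun M k r c := (M r c).coeff k
  left_inv A := by ext; simp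
  right_inv M := by ext; simp

@[simp]
theorem tensorEquivMatrix_coeff (A : Tensor R m n p) (r : Fin m) (c : Fin n) (k : ZMod p) :
    (tensorEquivMatrix A r c).coeff k = A k r c := by
  change Finsupp.equivFunOnFinite.symm (fun k => A k r c) k = _
  simp

theorem tensorEquivMatrix_tpr (A : Tensor R m n p) (B : Tensor R n l p) :
    tensorEquivMatrix (tpr A B) = tensorEquivMatrix A * tensorEquivMatrix B := by
  ext r c i
  simp only [tensorEquivMatrix_coeff, tpr, Matrix.mul_apply, AddMonoidAlgebra.coeff_sum,
    Finsupp.finsetSum_apply, Matrix.sum_apply]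
  rw [Finset.sum_comm]
  refine Finset.sum_congr rfl fun j _ => ?_
  rw [AddMonoidAlgebra.coeff_mul_apply_right, Finsupp.sum_fintype _ _ (by simp)]
  simp [sub_eq_add_neg]

theorem tensorEquivMatrix_tId : tensorEquivMatrix (tId R n p) = 1 := by
  ext r c i
  rw [tensorEquivMatrix_coeff, Matrix.one_apply, AddMonoidAlgebra.one_def]
  rcases eq_or_ne i 0 with rfl | hi <;> rcases eq_or_ne r c with rfl | hrc <;>
    simp [tId, *, AddMonoidAlgebra.coeff_single, Finsupp.single_eq_of_ne]

end TensorEquivMatrix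

theorem stmt11 {n p : ℕ} [NeZero p] :
    ∀ A : Tensor ℝ n n p, ∃ W Winv : Tensor ℝ n n p,
      tpr W Winv = tId ℝ n p ∧ tpr Winv W = tId ℝ n p ∧
      tpr A (tpr W A) = A := by
  intro A
  let e : Tensor ℝ n n p ≃ _ := tensorEquivMatrix
  -- With this, Maschke's theorem provides `IsSemisimpleRing (Matrix (Fin n) (Fin n) ℝ[ZMod p])`.
  have : NeZero (Nat.card (ZMod p) : ℝ) := ⟨by simp [NeZero.ne p]⟩
  obtain ⟨_, ⟨u, rfl⟩, hu⟩ := IsSemisimpleRing.isUnitRegular (e A)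
  refine ⟨e.symm u, e.symm ↑u⁻¹, e.injective ?_, e.injective ?_, e.injective ?_⟩ <;>
    simp only [e, tensorEquivMatrix_tpr, tensorEquivMatrix_tId, Equiv.apply_symm_apply]
  · exact u.mul_inv
  · exact u.inv_mul
  · rw [← mul_assoc, hu]
end

section
/- Moore–Penrose inverse from a real t-SVD: let A ∈ ℝ^{m×n×p} with real t-SVD A = U * S * Vᵀ, where U, V are orthogonal tensors and S is f-diagonal with nonnegative entries, constructed so that S admits a real Moore–Penrose inverse S† (satisfying the four Penrose equations under the t-product). Then X = V * S† * Uᵀ satisfies the four Penrose equations for A: A*X*A = A, X*A*X = X, (A*X)ᵀ = A*X, (X*A)ᵀ = X*A; hence A† = V * S† * Uᵀ and A† is real-valued. -/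
open Matrix Complex BigOperators Kronecker

/-! Because `Uᵀ * U` and `Vᵀ * V` are identities, products of tensors of the form `U * M * Vᵀ`
multiply like their middle factors, and the t-transpose acts on them through the middle factor.
Hence each Penrose equation for `U * S * Vᵀ` and `V * S† * Uᵀ` reduces to the one for `S` and `S†`. -/

section TProduct

variable {F : Type*} {p : ℕ}

lemma tT_tT {m n : ℕ} (A : Tensor F m n p) : tT (tT A) = A := by
  funext i
  simp [tT]

variable [CommRing F] [NeZero p]

lemma tpr_assoc {m n l q : ℕ} (A : Tensor F m n p) (B : Tensor F n l p) (C : Tensor F l q p) :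
    tpr (tpr A B) C = tpr A (tpr B C) := by
  funext i
  simp only [tpr, Matrix.sum_mul, Matrix.mul_sum]
  rw [← Fintype.sum_prod_type', ← Fintype.sum_prod_type']
  refine Fintype.sum_equiv
    ⟨fun x => (x.1 + x.2, x.1), fun x => (x.2, x.1 - x.2),
      fun x => by simp, fun x => by simp⟩ _ _ fun x => ?_
  simp only [Equiv.coe_fn_mk]
  rw [Matrix.mul_assoc, sub_sub, add_sub_cancel_left]

lemma tId_tpr {m n : ℕ} (A : Tensor F m n p) : tpr (tId F m p) A = A := by
  funext i
  simp only [tpr, tId]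
  rw [Finset.sum_eq_single i (fun j _ hj => by simp [sub_eq_zero, hj.symm]) (by simp)]
  simp

lemma tT_tpr {m n l : ℕ} (A : Tensor F m n p) (B : Tensor F n l p) :
    tT (tpr A B) = tpr (tT B) (tT A) := by
  funext i
  simp only [tpr, tT, Matrix.transpose_sum]
  refine Fintype.sum_equiv ⟨fun j => j + i, fun j => j - i, fun j => by simp, fun j => by simp⟩
    _ _ fun j => ?_
  simp only [Equiv.coe_fn_mk, Matrix.transpose_mul]
  rw [show -i - j = -(j + i) by ring, show (-(i - (j + i)) : ZMod p) = j by ring]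

lemma tT_tpr_tpr_tT {m n k l : ℕ} (U : Tensor F m k p) (M : Tensor F k l p)
    (V : Tensor F n l p) :
    tT (tpr U (tpr M (tT V))) = tpr V (tpr (tT M) (tT U)) := by
  rw [tT_tpr, tT_tpr, tT_tT, tpr_assoc]

lemma tpr_tpr_tT_mul_tpr_tpr_tT {m n q k l r : ℕ} {V : Tensor F n l p}
    (hV : tpr (tT V) V = tId F l p) (U : Tensor F m k p) (M : Tensor F k l p)
    (N : Tensor F l r p) (W : Tensor F q r p) :
    tpr (tpr U (tpr M (tT V))) (tpr V (tpr N (tT W))) = tpr U (tpr (tpr M N) (tT W)) := by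
  rw [tpr_assoc, tpr_assoc, ← tpr_assoc (tT V), hV, tId_tpr, tpr_assoc]

end TProduct

structure IsTMoorePenroseInverse {F : Type*} [CommRing F] {m n p : ℕ} [NeZero p]
    (A : Tensor F m n p) (X : Tensor F n m p) : Prop where
  tpr_tpr_self : tpr A (tpr X A) = A
  tpr_tpr_inv : tpr X (tpr A X) = X
  tT_tpr_self_inv : tT (tpr A X) = tpr A X
  tT_tpr_inv_self : tT (tpr X A) = tpr X A

theorem IsTMoorePenroseInverse.tpr_tpr_tT {F : Type*} [CommRing F] {m n k l p : ℕ} [NeZero p]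
    {S : Tensor F k l p} {Sd : Tensor F l k p} (hS : IsTMoorePenroseInverse S Sd)
    {U : Tensor F m k p} {V : Tensor F n l p}
    (hU : tpr (tT U) U = tId F k p) (hV : tpr (tT V) V = tId F l p) :
    IsTMoorePenroseInverse (tpr U (tpr S (tT V))) (tpr V (tpr Sd (tT U))) := by
  have hAX := tpr_tpr_tT_mul_tpr_tpr_tT hV U S Sd U
  have hXA := tpr_tpr_tT_mul_tpr_tpr_tT hU V Sd S V
  refine ⟨?_, ?_, ?_, ?_⟩
  · rw [← tpr_assoc, hAX, tpr_tpr_tT_mul_tpr_tpr_tT hU, tpr_assoc S, hS.tpr_tpr_self]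
  · rw [← tpr_assoc, hXA, tpr_tpr_tT_mul_tpr_tpr_tT hV, tpr_assoc Sd, hS.tpr_tpr_inv]
  · rw [hAX, tT_tpr_tpr_tT, hS.tT_tpr_self_inv]
  · rw [hXA, tT_tpr_tpr_tT, hS.tT_tpr_inv_self]

theorem stmt13_general {m n p : ℕ} [NeZero p]
    (A : Tensor ℝ m n p) (U : Tensor ℝ m m p) (S : Tensor ℝ m n p)
    (V : Tensor ℝ n n p) (Sd : Tensor ℝ n m p) (X : Tensor ℝ n m p)
    (hU1 : tpr (tT U) U = tId ℝ m p)
    (hV1 : tpr (tT V) V = tId ℝ n p)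
    (hP1 : tpr S (tpr Sd S) = S)
    (hP2 : tpr Sd (tpr S Sd) = Sd)
    (hP3 : tT (tpr S Sd) = tpr S Sd)
    (hP4 : tT (tpr Sd S) = tpr Sd S)
    (hA : A = tpr U (tpr S (tT V)))
    (hX : X = tpr V (tpr Sd (tT U))) :
    tpr A (tpr X A) = A ∧
    tpr X (tpr A X) = X ∧
    tT (tpr A X) = tpr A X ∧
    tT (tpr X A) = tpr X A := by
  subst hA hX
  obtain ⟨h1, h2, h3, h4⟩ := IsTMoorePenroseInverse.tpr_tpr_tT ⟨hP1, hP2, hP3, hP4⟩ hU1 hV1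
  exact ⟨h1, h2, h3, h4⟩

theorem stmt13 {m n p : ℕ} [NeZero p]
    (A : Tensor ℝ m n p) (U : Tensor ℝ m m p) (S : Tensor ℝ m n p)
    (V : Tensor ℝ n n p) (Sd : Tensor ℝ n m p) (X : Tensor ℝ n m p)
    (hU1 : tpr (tT U) U = tId ℝ m p) (hU2 : tpr U (tT U) = tId ℝ m p)
    (hV1 : tpr (tT V) V = tId ℝ n p) (hV2 : tpr V (tT V) = tId ℝ n p)
    (hSdiag : ∀ i, ∀ (r : Fin m) (c : Fin n), (r : ℕ) ≠ (c : ℕ) → S i r c = 0)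
    (hSnn : ∀ i, ∀ (r : Fin m) (c : Fin n), 0 ≤ S i r c)
    (hP1 : tpr S (tpr Sd S) = S)
    (hP2 : tpr Sd (tpr S Sd) = Sd)
    (hP3 : tT (tpr S Sd) = tpr S Sd)
    (hP4 : tT (tpr Sd S) = tpr Sd S)
    (hA : A = tpr U (tpr S (tT V)))
    (hX : X = tpr V (tpr Sd (tT U))) :
    tpr A (tpr X A) = A ∧
    tpr X (tpr A X) = X ∧
    tT (tpr A X) = tpr A X ∧
    tT (tpr X A) = tpr X A :=
  stmt13_general A U S V Sd X hU1 hV1 hP1 hP2 hP3 hP4 hA hX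
end

section
/- If all Fourier blocks Σ_1,…,Σ_p of a real tensor S are equal real diagonal matrices with nonnegative entries satisfying Σ_{p−k+2} = Σ_k, then the tensor X defined by the Fourier blocks Σ_1†,…,Σ_p† (matrix Moore–Penrose inverses) is real-valued and is the Moore–Penrose inverse of S with respect to the t-product. -/
open Matrix Complex BigOperators Kronecker

/-- Moore–Penrose inverse of a (rectangular) diagonal matrix: transpose and invert
the nonzero diagonal entries. -/
noncomputable def pinvDiag {m n : ℕ} (Sg : Matrix (Fin m) (Fin n) ℂ) :
    Matrix (Fin n) (Fin m) ℂ :=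
  Matrix.of fun r c => if (r : ℕ) = (c : ℕ) then (Sg c r)⁻¹ else 0

/-! The Fourier blocks of a tensor are its discrete Fourier transform `ZMod.dft` over the slice
index. The DFT is injective, turns the t-product into the blockwise matrix product and the tensor
transpose into blockwise transposition composed with `k ↦ -k`, so each Penrose equation reduces to
the corresponding identity for a rectangular diagonal matrix and its pseudo-inverse. The formula
for `bcirc X` says exactly that `X` is the inverse DFT of the blocks `Σ_k†`, and an inverse DFT of
real blocks satisfying `Σ_{-k} = Σ_k` is real. -/

open ZMod

section Fourier

variable {m n l p : ℕ} [NeZero p]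

lemma xi_pow_val_mul_val (i k : ZMod p) :
    xi p ^ (i.val * k.val) = stdAddChar (-(i * k)) := by
  have hik : (((i.val * k.val : ℕ) : ℤ) : ZMod p) = i * k := by
    push_cast; simp only [natCast_val, cast_id]
  rw [← hik, ← Int.cast_neg, stdAddChar_coe, xi, ← Complex.exp_nat_mul]
  congr 1
  push_cast
  ring

lemma fblock_eq_dft (A : Tensor ℂ m n p) : fblock A = 𝓕 A := by
  ext1 i
  simp only [fblock, dft_apply, xi_pow_val_mul_val, mul_comm i]

lemma fblock_injective : Function.Injective (fblock : Tensor ℂ m n p → _) := by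
  simpa only [funext fblock_eq_dft] using dft.injective

lemma fblock_tpr (A : Tensor ℂ m n p) (B : Tensor ℂ n l p) (i : ZMod p) :
    fblock (tpr A B) i = fblock A i * fblock B i := by
  simp only [fblock_eq_dft, dft_apply, tpr, Matrix.sum_mul, Matrix.mul_sum, Finset.smul_sum]
  rw [Finset.sum_comm]
  refine Finset.sum_congr rfl fun j _ => ?_
  rw [← Equiv.sum_comp (Equiv.addRight j)]
  refine Finset.sum_congr rfl fun s _ => ?_
  rw [Equiv.coe_addRight, add_sub_cancel_right, Matrix.smul_mul, Matrix.mul_smul, smul_smul,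
    add_mul, neg_add, AddChar.map_add_eq_mul]

lemma fblock_tT (A : Tensor ℂ m n p) (i : ZMod p) :
    fblock (tT A) i = (fblock A (-i))ᵀ := by
  simp only [fblock_eq_dft, dft_apply, tT, Matrix.transpose_sum, Matrix.transpose_smul]
  rw [← Equiv.sum_comp (Equiv.neg (ZMod p))]
  simp only [Equiv.neg_apply, neg_neg, neg_mul, mul_neg]

lemma isRealM_invDFT {Q : ZMod p → Matrix (Fin m) (Fin n) ℂ} (hreal : ∀ k, IsRealM (Q k))
    (heven : ∀ k, Q (-k) = Q k) (t : ZMod p) : IsRealM (𝓕⁻ Q t) := by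
  intro r c
  rw [← Complex.conj_eq_iff_im]
  simp only [invDFT_apply, Matrix.smul_apply, Matrix.sum_apply, smul_eq_mul, map_mul, map_sum,
    map_inv₀, map_natCast, ← AddChar.map_neg_eq_conj, Complex.conj_eq_iff_im.mpr (hreal _ r c)]
  rw [← Equiv.sum_comp (Equiv.neg (ZMod p))]
  simp only [Equiv.neg_apply, heven, neg_mul, neg_neg]

end Fourier

lemma bcirc_injective {F : Type*} {m n p : ℕ} :
    Function.Injective (bcirc : Tensor F m n p → _) := by
  intro A B h
  funext t
  ext r c
  simpa only [bcirc, of_apply, sub_zero] using congrFun (congrFun h (t, r)) (0, c)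

section BlockCirculant

variable {m n p : ℕ} [NeZero p]

lemma Fmat_apply (j k : ZMod p) :
    Fmat p j k = (Real.sqrt p : ℂ)⁻¹ * stdAddChar (-(j * k)) := by
  rw [Fmat, of_apply, one_div, xi_pow_val_mul_val]

lemma kronecker_one_mul_blockDiag_mul_kronecker_one_apply (U V : Matrix (ZMod p) (ZMod p) ℂ)
    (Q : ZMod p → Matrix (Fin m) (Fin n) ℂ) (t s : ZMod p) (r : Fin m) (c : Fin n) :
    ((U ⊗ₖ (1 : Matrix (Fin m) (Fin m) ℂ)) * _root_.blockDiag Q *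
      (V ⊗ₖ (1 : Matrix (Fin n) (Fin n) ℂ))) (t, r) (s, c) = ∑ k, U t k * Q k r c * V k s := by
  simp [Matrix.mul_apply, Fintype.sum_prod_type, _root_.blockDiag, Matrix.one_apply]

lemma bcirc_invDFT (Q : ZMod p → Matrix (Fin m) (Fin n) ℂ) :
    bcirc (𝓕⁻ Q) = ((Fmat p)ᴴ ⊗ₖ (1 : Matrix (Fin m) (Fin m) ℂ)) * _root_.blockDiag Q *
      ((Fmat p) ⊗ₖ (1 : Matrix (Fin n) (Fin n) ℂ)) := by
  have hsqrt : (Real.sqrt p : ℂ)⁻¹ * (Real.sqrt p : ℂ)⁻¹ = (p : ℂ)⁻¹ := by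
    rw [← mul_inv, ← Complex.ofReal_mul, Real.mul_self_sqrt (Nat.cast_nonneg p),
      Complex.ofReal_natCast]
  ext ⟨t, r⟩ ⟨s, c⟩
  rw [kronecker_one_mul_blockDiag_mul_kronecker_one_apply, bcirc, of_apply, invDFT_apply,
    Matrix.smul_apply, Matrix.sum_apply, smul_eq_mul, Finset.mul_sum]
  refine Finset.sum_congr rfl fun k _ => ?_
  simp only [conjTranspose_apply, Fmat_apply, RCLike.star_def, map_mul, map_inv₀, conj_ofReal,
    ← AddChar.map_neg_eq_conj, neg_neg, Matrix.smul_apply, smul_eq_mul]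
  rw [mul_sub, sub_eq_add_neg, AddChar.map_add_eq_mul]
  linear_combination -stdAddChar (k * t) * stdAddChar (-(k * s)) * Q k r c * hsqrt

end BlockCirculant

def IsRectDiag {R : Type*} [Zero R] {m n : ℕ} (D : Matrix (Fin m) (Fin n) R) : Prop :=
  ∀ (r : Fin m) (c : Fin n), (r : ℕ) ≠ c → D r c = 0

namespace IsRectDiag

variable {R : Type*} [NonUnitalNonAssocSemiring R] {m n l : ℕ}
  {D : Matrix (Fin m) (Fin n) R} {E : Matrix (Fin n) (Fin l) R}

lemma mul_apply_of_eq (hD : IsRectDiag D) (hE : IsRectDiag E) {r : Fin m} {t : Fin n}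
    {c : Fin l} (hrt : (r : ℕ) = t) (htc : (t : ℕ) = c) : (D * E) r c = D r t * E t c := by
  rw [Matrix.mul_apply]
  refine Finset.sum_eq_single t (fun s _ hst => ?_) (by simp)
  by_cases hrs : (r : ℕ) = s
  · rw [hE s c fun hsc => hst (Fin.ext (by omega)), mul_zero]
  · rw [hD r s hrs, zero_mul]

lemma mul (hD : IsRectDiag D) (hE : IsRectDiag E) : IsRectDiag (D * E) := by
  intro r c hrc
  rw [Matrix.mul_apply]
  refine Finset.sum_eq_zero fun s _ => ?_
  by_cases hrs : (r : ℕ) = s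
  · rw [hE s c (by omega), mul_zero]
  · rw [hD r s hrs, zero_mul]

lemma transpose_eq {D : Matrix (Fin m) (Fin m) R} (hD : IsRectDiag D) : Dᵀ = D := by
  ext r c
  by_cases hrc : r = c
  · rw [hrc, transpose_apply]
  · rw [transpose_apply, hD c r (fun h => hrc (Fin.ext h.symm)), hD r c (Fin.val_ne_of_ne hrc)]

end IsRectDiag

section PseudoInverse

variable {m n : ℕ} {D : Matrix (Fin m) (Fin n) ℂ}

lemma pinvDiag_apply_of_eq {a : Fin n} {b : Fin m} (h : (a : ℕ) = b) :
    pinvDiag D a b = (D b a)⁻¹ := by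
  rw [pinvDiag, of_apply, if_pos h]

lemma isRectDiag_pinvDiag (D : Matrix (Fin m) (Fin n) ℂ) : IsRectDiag (pinvDiag D) :=
  fun a b h => by rw [pinvDiag, of_apply, if_neg h]

lemma isRealM_pinvDiag (hD : IsRealM D) : IsRealM (pinvDiag D) := by
  intro r c
  rw [pinvDiag, of_apply]
  split_ifs
  · rw [Complex.inv_im, hD c r, neg_zero, zero_div]
  · rfl

lemma IsRectDiag.mul_pinvDiag_mul (hD : IsRectDiag D) : D * (pinvDiag D * D) = D := by
  have hP := isRectDiag_pinvDiag D
  ext r c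
  by_cases h : (r : ℕ) = c
  · rw [hD.mul_apply_of_eq (hP.mul hD) h rfl, hP.mul_apply_of_eq hD h.symm h,
      pinvDiag_apply_of_eq h.symm, ← mul_assoc, mul_inv_mul_cancel]
  · rw [hD.mul (hP.mul hD) r c h, hD r c h]

lemma IsRectDiag.pinvDiag_mul_mul_pinvDiag (hD : IsRectDiag D) :
    pinvDiag D * (D * pinvDiag D) = pinvDiag D := by
  have hP := isRectDiag_pinvDiag D
  ext a b
  by_cases h : (a : ℕ) = b
  · rw [hP.mul_apply_of_eq (hD.mul hP) h rfl, hD.mul_apply_of_eq hP h.symm h,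
      pinvDiag_apply_of_eq h, ← mul_assoc]
    simpa using mul_inv_mul_cancel (D b a)⁻¹
  · rw [hP.mul (hD.mul hP) a b h, hP a b h]

end PseudoInverse

theorem stmt19_general {m n p : ℕ} [NeZero p] (S : Tensor ℝ m n p)
    (hdiag : ∀ (k : ZMod p) (r : Fin m) (c : Fin n),
      (r : ℕ) ≠ (c : ℕ) → fblock (cplx S) k r c = 0)
    (hreal : ∀ (k : ZMod p) (r : Fin m) (c : Fin n), (fblock (cplx S) k r c).im = 0)
    (hsym : ∀ k : ZMod p, fblock (cplx S) (-k) = fblock (cplx S) k) :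
    ∀ X : Tensor ℂ n m p,
      bcirc X =
        ((Fmat p)ᴴ ⊗ₖ (1 : Matrix (Fin n) (Fin n) ℂ)) *
          blockDiag (fun k => pinvDiag (fblock (cplx S) k)) *
          ((Fmat p) ⊗ₖ (1 : Matrix (Fin m) (Fin m) ℂ)) →
      (∀ i, IsRealM (X i)) ∧
      tpr (cplx S) (tpr X (cplx S)) = cplx S ∧
      tpr X (tpr (cplx S) X) = X ∧
      tT (tpr (cplx S) X) = tpr (cplx S) X ∧
      tT (tpr X (cplx S)) = tpr X (cplx S) := by
  intro X hX
  have hX' : X = 𝓕⁻ fun k => pinvDiag (fblock (cplx S) k) :=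
    bcirc_injective (hX.trans (bcirc_invDFT _).symm)
  have hfX : fblock X = fun k => pinvDiag (fblock (cplx S) k) := by
    rw [hX', fblock_eq_dft, LinearEquiv.apply_symm_apply]
  have hD : ∀ k, IsRectDiag (fblock (cplx S) k) := hdiag
  have hDP : ∀ k, IsRectDiag (fblock (cplx S) k * pinvDiag (fblock (cplx S) k)) :=
    fun k => (hD k).mul (isRectDiag_pinvDiag _)
  have hPD : ∀ k, IsRectDiag (pinvDiag (fblock (cplx S) k) * fblock (cplx S) k) :=
    fun k => (isRectDiag_pinvDiag _).mul (hD k)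
  refine ⟨?_, ?_, ?_, ?_, ?_⟩
  · rw [hX']
    exact isRealM_invDFT (fun k => isRealM_pinvDiag (hreal k)) (fun k => by rw [hsym])
  all_goals refine fblock_injective (funext fun k => ?_)
  · simpa only [fblock_tpr, hfX] using (hD k).mul_pinvDiag_mul
  · simpa only [fblock_tpr, hfX] using (hD k).pinvDiag_mul_mul_pinvDiag
  · simpa only [fblock_tT, fblock_tpr, hfX, hsym] using (hDP k).transpose_eq
  · simpa only [fblock_tT, fblock_tpr, hfX, hsym] using (hPD k).transpose_eq

theorem stmt19 {m n p : ℕ} [NeZero p] (S : Tensor ℝ m n p)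
    (hdiag : ∀ (k : ZMod p) (r : Fin m) (c : Fin n),
      (r : ℕ) ≠ (c : ℕ) → fblock (cplx S) k r c = 0)
    (hreal : ∀ (k : ZMod p) (r : Fin m) (c : Fin n), (fblock (cplx S) k r c).im = 0)
    (hnn : ∀ (k : ZMod p) (r : Fin m) (c : Fin n), 0 ≤ (fblock (cplx S) k r c).re)
    (hsym : ∀ k : ZMod p, fblock (cplx S) (-k) = fblock (cplx S) k) :
    ∀ X : Tensor ℂ n m p,
      bcirc X =
        ((Fmat p)ᴴ ⊗ₖ (1 : Matrix (Fin n) (Fin n) ℂ)) *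
          blockDiag (fun k => pinvDiag (fblock (cplx S) k)) *
          ((Fmat p) ⊗ₖ (1 : Matrix (Fin m) (Fin m) ℂ)) →
      (∀ i, IsRealM (X i)) ∧
      tpr (cplx S) (tpr X (cplx S)) = cplx S ∧
      tpr X (tpr (cplx S) X) = X ∧
      tT (tpr (cplx S) X) = tpr (cplx S) X ∧
      tT (tpr X (cplx S)) = tpr X (cplx S) :=
  stmt19_general S hdiag hreal hsym
end
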